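/- Let Δ be a set of variable names, E_Δ a weak head evaluation context of the linear substitution calculus capturing exactly the variables in Δ, and a a special name. There exist a set of names Γ (possibly containing both variable and special names), a non-blocking π-calculus context N_{Δ⊎Γ}, and a special name b such that ⟦E_Δ⟨t⟩⟧_a = N_{Δ⊎Γ}⟨⟦t⟧_b⟩ and Γ ∩ fv(t) = ∅, for every term t. Moreover, if E_Δ is a substitution context L_Δ then b = a, Γ = ∅, and N_Δ does not depend on a. -/
import Mathlib


/-! ## Names: variable names (inl) and special names (inr) -/

abbrev Name := ℕ ⊕ ℕ

def NV (x : ℕ) : Name := Sum.inl x   -- variable name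
def NS (a : ℕ) : Name := Sum.inr a   -- special name

/-! ## The π-calculus fragment -/

inductive Proc : Type
  | nil : Proc
  | out1 : Name → Name → Proc                -- x̄⟨y⟩
  | out2 : Name → Name → Name → Proc         -- x̄⟨y,z⟩
  | nu : Name → Proc → Proc                  -- νx P
  | inp : Name → Name → Name → Proc → Proc   -- x(y,z).P  (binds y,z)
  | rin : Name → Name → Proc → Proc          -- !x(y).P   (binds y)
  | par : Proc → Proc → Proc
  deriving DecidableEq

namespace Proc

def fn : Proc → Finset Name
  | nil => ∅
  | out1 x y => {x, y}
  | out2 x y z => {x, y, z}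
  | nu x P => P.fn.erase x
  | inp x y z P => insert x ((P.fn.erase y).erase z)
  | rin x y P => insert x (P.fn.erase y)
  | par P Q => P.fn ∪ Q.fn

/-- Name-for-name substitution `P{n/o}` (replacing `o` by `n`), respecting shadowing. -/
def subst : Proc → Name → Name → Proc
  | nil, _, _ => nil
  | out1 x y, o, n => out1 (if x = o then n else x) (if y = o then n else y)
  | out2 x y z, o, n =>
      out2 (if x = o then n else x) (if y = o then n else y) (if z = o then n else z)
  | nu x P, o, n => if x = o then nu x P else nu x (P.subst o n)
  | inp x y z P, o, n =>
      inp (if x = o then n else x) y z (if y = o ∨ z = o then P else P.subst o n)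
  | rin x y P, o, n => rin (if x = o then n else x) y (if y = o then P else P.subst o n)
  | par P Q, o, n => par (P.subst o n) (Q.subst o n)

end Proc

/-! ## Non-blocking contexts -/

inductive NCtx : Type
  | hole : NCtx
  | parL : NCtx → Proc → NCtx
  | parR : Proc → NCtx → NCtx
  | nu : Name → NCtx → NCtx

namespace NCtx

def fill : NCtx → Proc → Proc
  | hole, P => P
  | parL N Q, P => Proc.par (N.fill P) Q
  | parR Q N, P => Proc.par Q (N.fill P)
  | nu x N, P => Proc.nu x (N.fill P)

/-- The names bound by the context above the hole. -/
def bnd : NCtx → Finset Name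
  | hole => ∅
  | parL N _ => N.bnd
  | parR _ N => N.bnd
  | nu x N => insert x N.bnd

/-- Free names of a context (with `fn ⟨·⟩ = ∅`). -/
def fnc : NCtx → Finset Name
  | hole => ∅
  | parL N Q => N.fnc ∪ Q.fn
  | parR Q N => Q.fn ∪ N.fnc
  | nu x N => N.fnc.erase x

end NCtx

/-! ## Structural congruence (including α-renaming, since terms are taken up to α) -/

inductive Scong : Proc → Proc → Prop
  | refl (P) : Scong P P
  | symm {P Q} : Scong P Q → Scong Q P
  | trans {P Q R} : Scong P Q → Scong Q R → Scong P R
  | parL {P P'} (Q) : Scong P P' → Scong (Proc.par P Q) (Proc.par P' Q)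
  | parR (P) {Q Q'} : Scong Q Q' → Scong (Proc.par P Q) (Proc.par P Q')
  | nu (x) {P Q} : Scong P Q → Scong (Proc.nu x P) (Proc.nu x Q)
  | parNil (P) : Scong (Proc.par P Proc.nil) P
  | parAssoc (P Q R) : Scong (Proc.par P (Proc.par Q R)) (Proc.par (Proc.par P Q) R)
  | parComm (P Q) : Scong (Proc.par P Q) (Proc.par Q P)
  | nuNil (x) : Scong (Proc.nu x Proc.nil) Proc.nil
  | scope {x P Q} : x ∉ P.fn → Scong (Proc.par P (Proc.nu x Q)) (Proc.nu x (Proc.par P Q))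
  | nuComm (x y P) : Scong (Proc.nu x (Proc.nu y P)) (Proc.nu y (Proc.nu x P))
  | alphaNu {x y P} : y ∉ P.fn → Scong (Proc.nu x P) (Proc.nu y (P.subst x y))
  | alphaInpL {x y y' z P} : y' ∉ P.fn → y' ≠ z →
      Scong (Proc.inp x y z P) (Proc.inp x y' z (P.subst y y'))
  | alphaInpR {x y z z' P} : z' ∉ P.fn → z' ≠ y →
      Scong (Proc.inp x y z P) (Proc.inp x y z' (P.subst z z'))
  | alphaRin {x y z P} : z ∉ P.fn → Scong (Proc.rin x y P) (Proc.rin x z (P.subst y z))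

/-! ## Reduction at a distance (⇒⊗ and ⇒!) -/

inductive RedM : Proc → Proc → Prop
  | step (N M : NCtx) (x y z y' z' : Name) (P : Proc)
      (hx : x ∉ N.bnd ∪ M.bnd)
      (h1 : Disjoint N.bnd M.bnd)
      (h2 : Disjoint N.bnd P.fn)
      (h3 : Disjoint N.fnc M.bnd) :
      RedM (Proc.par (N.fill (Proc.out2 x y z)) (M.fill (Proc.inp x y' z' P)))
           (M.fill (N.fill ((P.subst y' y).subst z' z)))
  | ctx (N : NCtx) {P Q : Proc} : RedM P Q → RedM (N.fill P) (N.fill Q)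

inductive RedE : Proc → Proc → Prop
  | step (N M : NCtx) (x y z : Name) (P : Proc)
      (hx : x ∉ N.bnd ∪ M.bnd)
      (h1 : Disjoint N.bnd M.bnd)
      (h2 : Disjoint N.bnd P.fn)
      (h3 : Disjoint N.fnc M.bnd) :
      RedE (Proc.par (N.fill (Proc.out1 x y)) (M.fill (Proc.rin x z P)))
           (M.fill (N.fill (Proc.par (P.subst z y) (Proc.rin x z P))))
  | ctx (N : NCtx) {P Q : Proc} : RedE P Q → RedE (N.fill P) (N.fill Q)

/-! ## Ordinary reduction (→⊗ and →!): closed under non-blocking contexts and ≡ -/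

inductive StepM : Proc → Proc → Prop
  | beta (x y z y' z' : Name) (Q : Proc) :
      StepM (Proc.par (Proc.out2 x y z) (Proc.inp x y' z' Q)) ((Q.subst y' y).subst z' z)
  | ctx (N : NCtx) {P Q : Proc} : StepM P Q → StepM (N.fill P) (N.fill Q)
  | congr {P P' Q Q'} : Scong P P' → StepM P' Q' → Scong Q' Q → StepM P Q

inductive StepE : Proc → Proc → Prop
  | beta (x y z : Name) (Q : Proc) :
      StepE (Proc.par (Proc.out1 x y) (Proc.rin x z Q)) (Proc.par (Q.subst z y) (Proc.rin x z Q))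
  | ctx (N : NCtx) {P Q : Proc} : StepE P Q → StepE (N.fill P) (N.fill Q)
  | congr {P P' Q Q'} : Scong P P' → StepE P' Q' → Scong Q' Q → StepE P Q

/-! ## The linear substitution calculus -/

inductive Tm : Type
  | var : ℕ → Tm
  | lam : ℕ → Tm → Tm
  | app : Tm → Tm → Tm
  | sub : Tm → ℕ → Tm → Tm    -- t[x/s]
  deriving DecidableEq

namespace Tm

def fv : Tm → Finset ℕ
  | var x => {x}
  | lam x t => t.fv.erase x
  | app t s => t.fv ∪ s.fv
  | sub t x s => t.fv.erase x ∪ s.fv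

/-- Variable-for-variable renaming `t{n/o}`, respecting shadowing. -/
def rename : Tm → ℕ → ℕ → Tm
  | var x, o, n => var (if x = o then n else x)
  | lam x t, o, n => if x = o then lam x t else lam x (t.rename o n)
  | app t s, o, n => app (t.rename o n) (s.rename o n)
  | sub t x s, o, n =>
      if x = o then sub t x (s.rename o n) else sub (t.rename o n) x (s.rename o n)

def isValue : Tm → Prop
  | var _ => True
  | lam _ _ => True
  | _ => False

end Tm

def fvN (t : Tm) : Finset Name := t.fv.image NV

/-- α-equivalence of terms of the linear substitution calculus. -/
inductive Aeq : Tm → Tm → Prop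
  | refl (t) : Aeq t t
  | symm {t s} : Aeq t s → Aeq s t
  | trans {t s u} : Aeq t s → Aeq s u → Aeq t u
  | lamCongr (x) {t t'} : Aeq t t' → Aeq (Tm.lam x t) (Tm.lam x t')
  | appCongr {t t' s s'} : Aeq t t' → Aeq s s' → Aeq (Tm.app t s) (Tm.app t' s')
  | subCongr (x) {t t' s s'} : Aeq t t' → Aeq s s' →
      Aeq (Tm.sub t x s) (Tm.sub t' x s')
  | lamAlpha {x y t} : y ∉ t.fv → Aeq (Tm.lam x t) (Tm.lam y (t.rename x y))
  | subAlpha {x y t s} : y ∉ t.fv → Aeq (Tm.sub t x s) (Tm.sub (t.rename x y) y s)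

/-! ## Weak head evaluation contexts and substitution contexts -/

inductive ECtx : Type
  | hole : ECtx
  | app : ECtx → Tm → ECtx
  | sub : ECtx → ℕ → Tm → ECtx
  deriving DecidableEq

namespace ECtx

def fill : ECtx → Tm → Tm
  | hole, t => t
  | app E s, t => Tm.app (E.fill t) s
  | sub E x s, t => Tm.sub (E.fill t) x s

/-- Variables captured by the context. -/
def bnd : ECtx → Finset ℕ
  | hole => ∅
  | app E _ => E.bnd
  | sub E x _ => insert x E.bnd

/-- Substitution contexts `L ::= ⟨·⟩ | L[x/t]`. -/
def isSub : ECtx → Prop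
  | hole => True
  | app _ _ => False
  | sub E _ _ => E.isSub

end ECtx

/-! ## Linear weak head reduction -/

inductive StepDb : Tm → Tm → Prop
  | step (E L : ECtx) (x : ℕ) (t s : Tm)
      (hL : L.isSub) (hx : x ∉ L.bnd) (hfv : Disjoint s.fv L.bnd) :
      StepDb (E.fill (Tm.app (L.fill (Tm.lam x t)) s)) (E.fill (L.fill (Tm.sub t x s)))

inductive StepLs : Tm → Tm → Prop
  | step (E E' : ECtx) (x : ℕ) (s : Tm)
      (hx : x ∉ E'.bnd) (hfv : Disjoint s.fv E'.bnd) :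
      StepLs (E.fill (Tm.sub (E'.fill (Tm.var x)) x s)) (E.fill (Tm.sub (E'.fill s) x s))

def StepWh (t s : Tm) : Prop := StepDb t s ∨ StepLs t s

/-! ## The call-by-name translation (relational, up to choice of fresh names) -/

inductive Cbn : Tm → ℕ → Proc → Prop
  | var (x a : ℕ) : Cbn (Tm.var x) a (Proc.out1 (NV x) (NS a))
  | lam {x t a b P} : b ≠ a → Cbn t b P →
      Cbn (Tm.lam x t) a (Proc.inp (NS a) (NV x) (NS b) P)
  | app {t s : Tm} {a b c x : ℕ} {P Q : Proc} :
      b ≠ a → x ∉ t.fv → x ∉ s.fv →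
      Cbn t b P → Cbn s c Q →
      Cbn (Tm.app t s) a
        (Proc.nu (NS b) (Proc.nu (NV x)
          (Proc.par (Proc.par P (Proc.out2 (NS b) (NV x) (NS a)))
                    (Proc.rin (NV x) (NS c) Q))))
  | sub {t s : Tm} {x a b : ℕ} {P Q : Proc} :
      x ∉ s.fv → Cbn t a P → Cbn s b Q →
      Cbn (Tm.sub t x s) a (Proc.nu (NV x) (Proc.par P (Proc.rin (NV x) (NS b) Q)))

/-! ## The value substitution kernel -/

mutual
  inductive VTm : Type
    | val : VVal → VTm
    | app : VVal → VTm → VTm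
    | sub : VTm → ℕ → VTm → VTm   -- t[x/s]
  inductive VVal : Type
    | var : ℕ → VVal
    | lam : ℕ → VTm → VVal
end

mutual
  def VTm.fv : VTm → Finset ℕ
    | .val v => v.fv
    | .app v t => v.fv ∪ t.fv
    | .sub t x s => t.fv.erase x ∪ s.fv
  def VVal.fv : VVal → Finset ℕ
    | .var x => {x}
    | .lam x t => t.fv.erase x
end

def fvNT (t : VTm) : Finset Name := t.fv.image NV
def fvNV (v : VVal) : Finset Name := v.fv.image NV

/-! Evaluation contexts of the kernel -/

inductive VECtx : Type
  | hole : VECtx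
  | appR : VVal → VECtx → VECtx          -- v E
  | subIn : VTm → ℕ → VECtx → VECtx      -- t[x/E]
  | subL : VECtx → ℕ → VTm → VECtx       -- E[x/t]

namespace VECtx

def fill : VECtx → VTm → VTm
  | hole, t => t
  | appR v E, t => VTm.app v (E.fill t)
  | subIn u x E, t => VTm.sub u x (E.fill t)
  | subL E x u, t => VTm.sub (E.fill t) x u

def bnd : VECtx → Finset ℕ
  | hole => ∅
  | appR _ E => E.bnd
  | subIn _ _ E => E.bnd
  | subL E x _ => insert x E.bnd

/-- Substitution contexts `L ::= ⟨·⟩ | L[x/t]`. -/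
def isSub : VECtx → Prop
  | hole => True
  | appR _ _ => False
  | subIn _ _ _ => False
  | subL E _ _ => E.isSub

end VECtx

/-- Applicative contexts `A_Δ ::= E_Δ⟨⟨·⟩ t⟩`. -/
structure ACtx where
  E : VECtx
  arg : VTm

def ACtx.bnd (A : ACtx) : Finset ℕ := A.E.bnd
def ACtx.fill (A : ACtx) (v : VVal) : VTm := A.E.fill (VTm.app v A.arg)

/-! ## Linear weak applicative reduction -/

inductive StepVdb : VTm → VTm → Prop
  | step (E : VECtx) (x : ℕ) (t s : VTm) :
      StepVdb (E.fill (VTm.app (VVal.lam x t) s)) (E.fill (VTm.sub t x s))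

inductive StepVls : VTm → VTm → Prop
  | step (E : VECtx) (A : ACtx) (L : VECtx) (x : ℕ) (v : VVal)
      (hL : L.isSub) (hx : x ∉ A.bnd)
      (h1 : Disjoint v.fv A.bnd)
      (h2 : Disjoint (A.fill (VVal.var x)).fv L.bnd)
      (h3 : Disjoint A.bnd L.bnd) :
      StepVls (E.fill (VTm.sub (A.fill (VVal.var x)) x (L.fill (VTm.val v))))
              (E.fill (L.fill (VTm.sub (A.fill v) x (VTm.val v))))

def StepV (t s : VTm) : Prop := StepVdb t s ∨ StepVls t s

/-! Value subterms -/

mutual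
  inductive SubT : VVal → VTm → Prop
    | val {v w} : SubV v w → SubT v (VTm.val w)
    | appL {v w t} : SubV v w → SubT v (VTm.app w t)
    | appR {v w t} : SubT v t → SubT v (VTm.app w t)
    | subL {v t x s} : SubT v t → SubT v (VTm.sub t x s)
    | subR {v t x s} : SubT v s → SubT v (VTm.sub t x s)
  inductive SubV : VVal → VVal → Prop
    | refl (v) : SubV v v
    | lam {v x t} : SubT v t → SubV v (VVal.lam x t)
end

/-! ## The call-by-value translation (relational) -/

mutual
  inductive CbvT : VTm → ℕ → Proc → Prop
    | val {v : VVal} {x a : ℕ} {P : Proc} :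
        x ∉ v.fv → CbvV v a P →
        CbvT (VTm.val v) x (Proc.rin (NV x) (NS a) P)
    | app {v : VVal} {s : VTm} {x y b : ℕ} {P Q : Proc} :
        x ∉ v.fv → x ∉ s.fv → y ∉ v.fv → y ∉ s.fv → y ≠ x →
        CbvV v b P → CbvT s y Q →
        CbvT (VTm.app v s) x
          (Proc.nu (NS b) (Proc.nu (NV y)
            (Proc.par (Proc.par P (Proc.out2 (NS b) (NV y) (NV x))) Q)))
    | sub {s u : VTm} {x y : ℕ} {P Q : Proc} :
        x ≠ y → CbvT s x P → CbvT u y Q →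
        CbvT (VTm.sub s y u) x (Proc.nu (NV y) (Proc.par P Q))
  inductive CbvV : VVal → ℕ → Proc → Prop
    | var (y a : ℕ) : CbvV (VVal.var y) a (Proc.out1 (NV y) (NS a))
    | lam {y z a : ℕ} {s : VTm} {P : Proc} :
        z ≠ y → z ∉ s.fv → CbvT s z P →
        CbvV (VVal.lam y s) a (Proc.inp (NS a) (NV y) (NV z) P)
end

lemma ns_not_mem_fvN (a : ℕ) (t : Tm) : NS a ∉ fvN t := by
  simp [fvN, NS, NV]

lemma fn_cbn {t : Tm} {a : ℕ} {P : Proc} (h : Cbn t a P) :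
    P.fn ⊆ fvN t ∪ {NS a} := by
  induction h with
  | var x a => simp [Proc.fn, fvN, Tm.fv, Finset.insert_subset_iff]
  | lam hba hc ih =>
    intro n hn
    simp only [Proc.fn, Finset.mem_insert, Finset.mem_erase] at hn
    rcases hn with rfl | ⟨hb, hx, hn⟩
    · simp
    · have := ih hn
      simp only [fvN, Finset.mem_union, Finset.mem_image, Finset.mem_singleton] at this ⊢
      rcases this with ⟨y, hy, rfl⟩ | rfl
      · refine Or.inl ⟨y, ?_, rfl⟩
        simp only [Tm.fv, Finset.mem_erase]
        exact ⟨fun h => hx (by rw [h]), hy⟩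
      · exact absurd rfl hb
  | app hba hxt hxs hct hcs iht ihs =>
    intro n hn
    simp only [Proc.fn, Finset.mem_erase, Finset.mem_union, Finset.mem_insert,
      Finset.mem_singleton] at hn
    obtain ⟨hb, hn⟩ := hn
    obtain ⟨hx, hn⟩ := hn
    rcases hn with (hn | (rfl | (rfl | rfl))) | (rfl | ⟨hc, hn⟩)
    · have := iht hn
      simp only [fvN, Finset.mem_union, Finset.mem_image, Finset.mem_singleton] at this ⊢
      rcases this with ⟨y, hy, rfl⟩ | rfl
      · exact Or.inl ⟨y, by simp [Tm.fv, hy], rfl⟩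
      · exact absurd rfl hb
    · exact absurd rfl hb
    · exact absurd rfl hx
    · simp
    · exact absurd rfl hx
    · have := ihs hn
      simp only [fvN, Finset.mem_union, Finset.mem_image, Finset.mem_singleton] at this ⊢
      rcases this with ⟨y, hy, rfl⟩ | rfl
      · exact Or.inl ⟨y, by simp [Tm.fv, hy], rfl⟩
      · exact absurd rfl hc
  | sub hxs hct hcs iht ihs =>
    intro n hn
    simp only [Proc.fn, Finset.mem_erase, Finset.mem_union, Finset.mem_insert,
      Finset.mem_singleton] at hn
    obtain ⟨hx, hn⟩ := hn
    rcases hn with hn | (rfl | ⟨hb, hn⟩)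
    · have := iht hn
      simp only [fvN, Finset.mem_union, Finset.mem_image, Finset.mem_singleton] at this ⊢
      rcases this with ⟨y, hy, rfl⟩ | rfl
      · refine Or.inl ⟨y, ?_, rfl⟩
        simp only [Tm.fv, Finset.mem_union, Finset.mem_erase]
        exact Or.inl ⟨fun h => hx (by rw [h]), hy⟩
      · simp
    · exact absurd rfl hx
    · have := ihs hn
      simp only [fvN, Finset.mem_union, Finset.mem_image, Finset.mem_singleton] at this ⊢
      rcases this with ⟨y, hy, rfl⟩ | rfl
      · exact Or.inl ⟨y, by simp [Tm.fv, hy], rfl⟩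
      · exact absurd rfl hb

lemma fv_fill (E : ECtx) (t : Tm) : t.fv ⊆ (E.fill t).fv ∪ E.bnd := by
  induction E with
  | hole => simp [ECtx.fill]
  | app E s ih =>
    intro n hn
    have := ih hn
    simp only [ECtx.fill, ECtx.bnd, Tm.fv, Finset.mem_union] at this ⊢
    tauto
  | sub E x s ih =>
    intro n hn
    have := ih hn
    simp only [ECtx.fill, ECtx.bnd, Tm.fv, Finset.mem_union, Finset.mem_erase,
      Finset.mem_insert] at this ⊢
    by_cases hnx : n = x
    · tauto
    · tauto

/-- relating evaluation contexts and non-blocking contexts via the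
CBN translation. -/
theorem stmt3 (E : ECtx) (a : ℕ) (t : Tm) (R : Proc)
    (h : Cbn (E.fill t) a R) :
    ∃ (Γ : Finset Name) (N : NCtx) (b : ℕ) (P : Proc),
      Cbn t b P ∧ R = N.fill P ∧
      N.bnd = E.bnd.image NV ∪ Γ ∧ Disjoint (E.bnd.image NV) Γ ∧
      Disjoint Γ (fvN t) ∧
      (E.isSub → b = a ∧ Γ = ∅ ∧ NS a ∉ N.fnc) := by
  induction E generalizing a R with
  | hole =>
    exact ⟨∅, NCtx.hole, a, R, h, rfl, by simp [NCtx.bnd, ECtx.bnd],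
      by simp, by simp, fun _ => ⟨rfl, rfl, by simp [NCtx.fnc]⟩⟩
  | app E' s ih =>
    simp only [ECtx.fill] at h
    cases h with
    | @app _ _ _ b c x P Q hba hxt hxs hct hcs =>
      obtain ⟨Γ', N', b', P', hc', hP, hbnd, hdis1, hdis2, _⟩ := ih b _ hct
      subst hP
      refine ⟨(insert (NS b) (insert (NV x) Γ')) \ (E'.bnd.image NV),
        NCtx.nu (NS b) (NCtx.nu (NV x) (NCtx.parL
          (NCtx.parL N' (Proc.out2 (NS b) (NV x) (NS a)))
          (Proc.rin (NV x) (NS c) Q))), b', P', hc', rfl, ?_, ?_, ?_, ?_⟩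
      · ext n
        simp only [NCtx.bnd, ECtx.bnd, hbnd, Finset.mem_insert, Finset.mem_union,
          Finset.mem_sdiff]
        tauto
      · exact Finset.sdiff_disjoint.symm
      · rw [Finset.disjoint_left]
        intro n hn hnt
        simp only [Finset.mem_sdiff, Finset.mem_insert] at hn
        obtain ⟨hn1, hn2⟩ := hn
        rcases hn1 with rfl | rfl | hn1
        · exact ns_not_mem_fvN b t hnt
        · simp only [fvN, Finset.mem_image] at hnt
          obtain ⟨y, hy, hyx⟩ := hnt
          have : y = x := Sum.inl.inj hyx
          subst this
          have := fv_fill E' t hy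
          rcases Finset.mem_union.1 this with h1 | h1
          · exact hxt h1
          · exact hn2 (Finset.mem_image_of_mem _ h1)
        · exact (Finset.disjoint_left.1 hdis2) hn1 hnt
      · intro hS; exact hS.elim
  | sub E' x s ih =>
    simp only [ECtx.fill] at h
    cases h with
    | @sub _ _ _ _ b P Q hxs hct hcs =>
      obtain ⟨Γ', N', b', P', hc', hP, hbnd, hdis1, hdis2, hsub'⟩ := ih a _ hct
      subst hP
      refine ⟨Γ'.erase (NV x),
        NCtx.nu (NV x) (NCtx.parL N' (Proc.rin (NV x) (NS b) Q)),
        b', P', hc', rfl, ?_, ?_, ?_, ?_⟩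
      · ext n
        simp only [NCtx.bnd, ECtx.bnd, hbnd, Finset.image_insert, Finset.mem_insert,
          Finset.mem_union, Finset.mem_erase]
        by_cases hnx : n = NV x
        · tauto
        · tauto
      · rw [Finset.disjoint_left]
        intro n hn hn'
        simp only [ECtx.bnd, Finset.image_insert, Finset.mem_insert] at hn
        simp only [Finset.mem_erase] at hn'
        rcases hn with rfl | hn
        · exact hn'.1 rfl
        · exact (Finset.disjoint_left.1 hdis1) hn hn'.2
      · exact Finset.disjoint_of_subset_left (Finset.erase_subset _ _) hdis2
      · intro hS
        obtain ⟨rfl, rfl, hfnc⟩ := hsub' hS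
        refine ⟨rfl, by simp, ?_⟩
        simp only [NCtx.fnc, Proc.fn, Finset.mem_erase, Finset.mem_union,
          Finset.mem_insert]
        rintro ⟨hne, h1 | (h2 | h2)⟩
        · exact hfnc h1
        · exact hne h2
        · obtain ⟨hab, h2⟩ := h2
          have := fn_cbn hcs h2
          rcases Finset.mem_union.1 this with h3 | h3
          · exact ns_not_mem_fvN b' s h3
          · exact hab (Finset.mem_singleton.1 h3)
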